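/- arXiv:1907.04484 — 2 statements merged into one kernel-verified Lean document; each statement's English description precedes it below -/
import Mathlib

section
/- For any stationary stochastic policy π in an infinite-horizon MDP with discount factor γ < 1, the occupancy measure ρ_π uniquely determines π: π is the only policy whose occupancy measure equals ρ_π, and the policy can be recovered from the occupancy measure via P(π(s) = a) = ρ_π(s, a) / ∑_{a'} ρ_π(s, a') for every state s with ∑_{a'} ρ_π(s, a') > 0. -/
/-
STATEMENT 0 (Syed et al., Theorem 2): For any stationary stochastic policy π in an
infinite-horizon MDP with discount factor γ < 1, the occupancy measure
ρ_π(s, a) = P(π(s) = a) · ∑_{i=0}^∞ γ^i P(s_i = s | π) uniquely determines π: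
π is the only policy whose occupancy measure equals ρ_π, and
P(π(s) = a) = ρ_π(s, a) / ∑_{a'} ρ_π(s, a') for every s with ∑_{a'} ρ_π(s, a') > 0.
-/

noncomputable section

/-- `stateDist P μ π i s` is `P(s_i = s | π)`: the probability that the state at time `i`
equals `s` when following the stationary stochastic policy `π` in the MDP with
transition dynamics `P` and initial state distribution `μ`. -/
def stateDist {S A : Type*} [Fintype S] [Fintype A]
    (P : S → A → S → ℝ) (μ : S → ℝ) (π : S → A → ℝ) : ℕ → S → ℝ
  | 0 => μ
  | i + 1 => fun s' => ∑ s, ∑ a, stateDist P μ π i s * π s a * P s a s'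

/-- The occupancy measure `ρ_π(s, a) = P(π(s) = a) · ∑_{i=0}^∞ γ^i P(s_i = s | π)`. -/
def occupancy {S A : Type*} [Fintype S] [Fintype A] (γ : ℝ)
    (P : S → A → S → ℝ) (μ : S → ℝ) (π : S → A → ℝ) (s : S) (a : A) : ℝ :=
  π s a * ∑' i : ℕ, γ ^ i * stateDist P μ π i s

theorem occupancy_determines_policy
    {S A : Type*} [Fintype S] [Fintype A]
    (γ : ℝ) (hγ0 : 0 ≤ γ) (hγ1 : γ < 1)
    -- probabilistic state dynamics
    (P : S → A → S → ℝ) (hP : ∀ s a, (∀ s', 0 ≤ P s a s') ∧ ∑ s', P s a s' = 1)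
    -- initial state distribution
    (μ : S → ℝ) (hμ : (∀ s, 0 ≤ μ s) ∧ ∑ s, μ s = 1)
    -- two stationary stochastic policies
    (π π' : S → A → ℝ)
    (hπ : ∀ s, (∀ a, 0 ≤ π s a) ∧ ∑ a, π s a = 1)
    (hπ' : ∀ s, (∀ a, 0 ≤ π' s a) ∧ ∑ a, π' s a = 1) :
    -- (1) the policy is recovered from its occupancy measure:
    --     P(π(s) = a) = ρ_π(s,a) / ∑_{a'} ρ_π(s,a') whenever ∑_{a'} ρ_π(s,a') > 0
    (∀ s, 0 < ∑ a, occupancy γ P μ π s a →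
      ∀ a, π s a = occupancy γ P μ π s a / ∑ a', occupancy γ P μ π s a') ∧
    -- (2) uniqueness: π is the only policy whose occupancy measure equals ρ_π
    ((∀ s a, occupancy γ P μ π' s a = occupancy γ P μ π s a) →
      ∀ s, 0 < ∑ a, occupancy γ P μ π s a → ∀ a, π' s a = π s a) := by
  have hsum : ∀ (p : S → A → ℝ), (∀ s, (∀ a, 0 ≤ p s a) ∧ ∑ a, p s a = 1) →
      ∀ s, ∑ a, occupancy γ P μ p s a = ∑' i : ℕ, γ ^ i * stateDist P μ p i s := by
    intro p hp s
    simp only [occupancy, ← Finset.sum_mul, (hp s).2, one_mul]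
  constructor
  · intro s hpos a
    rw [hsum π hπ s] at hpos
    rw [occupancy, hsum π hπ s, mul_div_assoc, div_self (ne_of_gt hpos), mul_one]
  · intro heq s hpos a
    have hD : ∑' i : ℕ, γ ^ i * stateDist P μ π' i s
        = ∑' i : ℕ, γ ^ i * stateDist P μ π i s := by
      rw [← hsum π' hπ' s, ← hsum π hπ s]
      exact Finset.sum_congr rfl fun a _ => heq s a
    have h := heq s a
    rw [occupancy, occupancy, hD] at h
    rw [hsum π hπ s] at hpos
    exact mul_right_cancel₀ (ne_of_gt hpos) h

end
end

section
/- For any two stationary stochastic policies π and π' in an infinite-horizon MDP M with discount factor γ < 1 and bounded rewards, the expected cumulative discounted rewards are related through the advantage function of π evaluated along trajectories of π': η(π', M) = η(π, M) + E_{τ ~ π'}[ ∑_{i=0}^∞ γ^i A_π(s_i, a_i) ]. -/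
/-
Let `F_i = γ^i E_{s_i ~ π'}[V_π(s_i)]`. Unfolding `Q_π`, the `i`-th discounted advantage term
along `π'` is the `i`-th discounted reward of `π'` plus `F_{i+1} - F_i`, so the advantage series
telescopes to `η(π') - E_{s ~ μ}[V_π(s)]`. Taking `π' = π`, the advantages vanish by the Bellman
equation, which identifies `E_{s ~ μ}[V_π(s)]` with `η(π)`. All series converge because `γ < 1`
and an expectation `E_{s_i}[g(s_i)]` over a finite state space is bounded uniformly in `i`.
-/

noncomputable section

/-- `η(π, M) = E_{τ ~ π}[ ∑_{i=0}^∞ γ^i r(s_i, a_i) ]`, the expected cumulative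
discounted reward of policy `π`. -/
def eta {S A : Type*} [Fintype S] [Fintype A] (γ : ℝ)
    (P : S → A → S → ℝ) (r : S → A → ℝ) (μ : S → ℝ) (π : S → A → ℝ) : ℝ :=
  ∑' i : ℕ, γ ^ i * ∑ s, stateDist P μ π i s * ∑ a, π s a * r s a

/-- The Q-function of `π` expressed through its value function `V`:
`Q_π(s, a) = r(s,a) + γ ∑_{s'} P(s'|s,a) V_π(s')`. -/
def Qfun {S A : Type*} [Fintype S] (γ : ℝ)
    (P : S → A → S → ℝ) (r : S → A → ℝ) (V : S → ℝ) (s : S) (a : A) : ℝ :=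
  r s a + γ * ∑ s', P s a s' * V s'

open Finset

def IsDistribution {X : Type*} [Fintype X] (w : X → ℝ) : Prop :=
  (∀ x, 0 ≤ w x) ∧ ∑ x, w x = 1

lemma IsDistribution.abs_sum_mul_le {X : Type*} [Fintype X] {w : X → ℝ}
    (hw : IsDistribution w) (g : X → ℝ) : |∑ x, w x * g x| ≤ ∑ x, |g x| := by
  refine (abs_sum_le_sum_abs _ _).trans (sum_le_sum fun x _ => ?_)
  have hw_le_one : w x ≤ 1 := hw.2 ▸ single_le_sum (fun y _ => hw.1 y) (mem_univ x)
  rw [abs_mul, abs_of_nonneg (hw.1 x)]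
  exact mul_le_of_le_one_left (abs_nonneg _) hw_le_one

section PerformanceDifference

variable {S A : Type*} [Fintype S] [Fintype A]

lemma stateDist_succ_sum_mul (P : S → A → S → ℝ) (μ : S → ℝ) (p : S → A → ℝ)
    (f : S → ℝ) (i : ℕ) :
    ∑ s', stateDist P μ p (i + 1) s' * f s'
      = ∑ s, stateDist P μ p i s * ∑ a, p s a * ∑ s', P s a s' * f s' := by
  simp only [stateDist, sum_mul, mul_sum]
  rw [sum_comm]
  refine sum_congr rfl fun s _ => ?_
  rw [sum_comm]
  exact sum_congr rfl fun a _ => sum_congr rfl fun s' _ => by ring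

lemma isDistribution_stateDist {P : S → A → S → ℝ} (hP : ∀ s a, IsDistribution (P s a))
    {μ : S → ℝ} (hμ : IsDistribution μ) {p : S → A → ℝ} (hp : ∀ s, IsDistribution (p s))
    (i : ℕ) : IsDistribution (stateDist P μ p i) := by
  induction i with
  | zero => exact hμ
  | succ i ih =>
    refine ⟨fun s' => sum_nonneg fun s _ => sum_nonneg fun a _ =>
      mul_nonneg (mul_nonneg (ih.1 s) ((hp s).1 a)) ((hP s a).1 s'), ?_⟩
    simpa [(hP _ _).2, (hp _).2, ih.2] using stateDist_succ_sum_mul P μ p (fun _ => 1) i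

lemma summable_discounted_stateDist_sum_mul {γ : ℝ} (hγ0 : 0 ≤ γ) (hγ1 : γ < 1)
    {P : S → A → S → ℝ} (hP : ∀ s a, IsDistribution (P s a))
    {μ : S → ℝ} (hμ : IsDistribution μ) {p : S → A → ℝ} (hp : ∀ s, IsDistribution (p s))
    (g : S → ℝ) : Summable fun i => γ ^ i * ∑ s, stateDist P μ p i s * g s := by
  refine .of_norm_bounded ((summable_geometric_of_lt_one hγ0 hγ1).mul_right (∑ s, |g s|))
    fun i => ?_
  rw [Real.norm_eq_abs, abs_mul, abs_of_nonneg (pow_nonneg hγ0 i)]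
  exact mul_le_mul_of_nonneg_left
    ((isDistribution_stateDist hP hμ hp i).abs_sum_mul_le g) (pow_nonneg hγ0 i)

lemma sum_mul_advantage_eq (γ : ℝ) (P : S → A → S → ℝ) (r : S → A → ℝ) (V : S → ℝ)
    {w : A → ℝ} (hw : ∑ a, w a = 1) (s : S) :
    ∑ a, w a * (Qfun γ P r V s a - V s)
      = ∑ a, w a * r s a + γ * ∑ a, w a * ∑ s', P s a s' * V s' - V s := by
  have expand : ∀ a, w a * (Qfun γ P r V s a - V s)
      = w a * r s a + γ * (w a * ∑ s', P s a s' * V s') - w a * V s := fun a => by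
    unfold Qfun; ring
  rw [sum_congr rfl fun a _ => expand a, sum_sub_distrib, sum_add_distrib, ← mul_sum, ← sum_mul,
    hw, one_mul]

lemma discounted_advantage_eq (γ : ℝ) (P : S → A → S → ℝ) (r : S → A → ℝ) (μ : S → ℝ)
    {p : S → A → ℝ} (hp : ∀ s, ∑ a, p s a = 1) (V : S → ℝ) (i : ℕ) :
    γ ^ i * ∑ s, stateDist P μ p i s * ∑ a, p s a * (Qfun γ P r V s a - V s)
      = γ ^ i * ∑ s, stateDist P μ p i s * ∑ a, p s a * r s a
        + (γ ^ (i + 1) * ∑ s, stateDist P μ p (i + 1) s * V s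
          - γ ^ i * ∑ s, stateDist P μ p i s * V s) := by
  simp_rw [sum_mul_advantage_eq γ P r V (hp _)]
  rw [stateDist_succ_sum_mul]
  simp only [mul_add, mul_sub, sum_add_distrib, sum_sub_distrib,
    mul_left_comm (stateDist P μ p i _) γ, ← mul_sum]
  ring

lemma hasSum_discounted_advantage {γ : ℝ} (hγ0 : 0 ≤ γ) (hγ1 : γ < 1)
    {P : S → A → S → ℝ} (hP : ∀ s a, IsDistribution (P s a)) (r : S → A → ℝ)
    {μ : S → ℝ} (hμ : IsDistribution μ) {p : S → A → ℝ} (hp : ∀ s, IsDistribution (p s))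
    (V : S → ℝ) :
    HasSum (fun i => γ ^ i * ∑ s, stateDist P μ p i s * ∑ a, p s a * (Qfun γ P r V s a - V s))
      (eta γ P r μ p - ∑ s, μ s * V s) := by
  set F := fun i => γ ^ i * ∑ s, stateDist P μ p i s * V s
  have hF : Summable F := summable_discounted_stateDist_sum_mul hγ0 hγ1 hP hμ hp V
  have hF_shift : HasSum (fun i => F (i + 1)) (∑' i, F i - F 0)  := by
    simpa using (hasSum_nat_add_iff' 1).mpr hF.hasSum
  have hreward : HasSum (fun i => γ ^ i * ∑ s, stateDist P μ p i s * ∑ a, p s a * r s a)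
      (eta γ P r μ p) := (summable_discounted_stateDist_sum_mul hγ0 hγ1 hP hμ hp _).hasSum
  convert hreward.add (hF_shift.sub hF.hasSum) using 1
  · exact funext (discounted_advantage_eq γ P r μ (fun s => (hp s).2) V)
  · simp [F, stateDist, sub_eq_add_neg]

end PerformanceDifference

theorem performance_difference
    {S A : Type*} [Fintype S] [Fintype A]
    (γ : ℝ) (hγ0 : 0 ≤ γ) (hγ1 : γ < 1)
    -- probabilistic state dynamics
    (P : S → A → S → ℝ) (hP : ∀ s a, (∀ s', 0 ≤ P s a s') ∧ ∑ s', P s a s' = 1)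
    -- (bounded) reward function
    (r : S → A → ℝ)
    -- initial state distribution
    (μ : S → ℝ) (hμ : (∀ s, 0 ≤ μ s) ∧ ∑ s, μ s = 1)
    -- two stationary stochastic policies
    (π π' : S → A → ℝ)
    (hπ : ∀ s, (∀ a, 0 ≤ π s a) ∧ ∑ a, π s a = 1)
    (hπ' : ∀ s, (∀ a, 0 ≤ π' s a) ∧ ∑ a, π' s a = 1)
    -- V is the value function of π: V_π(s) = E_{τ~π}[∑ γ^i r | s_0 = s], i.e. the
    -- solution of the Bellman equation V_π(s) = E_{a ~ π(s)}[Q_π(s, a)]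
    (V : S → ℝ) (hV : ∀ s, V s = ∑ a, π s a * Qfun γ P r V s a) :
    eta γ P r μ π'
      = eta γ P r μ π
        + ∑' i : ℕ, γ ^ i * ∑ s, stateDist P μ π' i s *
            ∑ a, π' s a * (Qfun γ P r V s a - V s) := by
  have hπ_advantage : ∀ s, ∑ a, π s a * (Qfun γ P r V s a - V s) = 0 := fun s => by
    rw [sum_congr rfl fun a _ => mul_sub (π s a) _ (V s), sum_sub_distrib, ← sum_mul, (hπ s).2,
      one_mul, ← hV s, sub_self]
  have hη : eta γ P r μ π = ∑ s, μ s * V s := by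
    have hπ_sum := hasSum_discounted_advantage hγ0 hγ1 hP r hμ hπ V
    simp only [hπ_advantage, mul_zero, sum_const_zero] at hπ_sum
    linarith [hπ_sum.unique hasSum_zero]
  rw [(hasSum_discounted_advantage hγ0 hγ1 hP r hμ hπ' V).tsum_eq, hη]
  ring

end
end
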